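/- arXiv:2604.07529 — 2 statements merged into one kernel-verified Lean document; each statement's English description precedes it below -/
import Mathlib

section
/- (Proposition on regular immersion squares, equivalence (1)⇔(2).) Let (i₁, j₁, j₂, i₂) be an immersion square and m ∈ M₁. The fiberwise normal differential ν²(J)_m : ν(i₁)_m → ν(i₂)_{j₁(m)} is injective if and only if the fiberwise normal differential ν²(I)_m : ν(j₁)_m → ν(j₂)_{i₁(m)} is injective. -/
open scoped Manifold
open Function

/-- **Chain rule for a commutative square.**
If `r ∘ t = b ∘ l`, then `mfderiv r (t x)` maps the range of `mfderiv t x` into the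
range of `mfderiv b (l x)`. -/
theorem mapsTo_square
    {EX : Type*} [NormedAddCommGroup EX] [NormedSpace ℝ EX]
    {HX : Type*} [TopologicalSpace HX] {IX : ModelWithCorners ℝ EX HX}
    {X : Type*} [TopologicalSpace X] [ChartedSpace HX X]
    {EX' : Type*} [NormedAddCommGroup EX'] [NormedSpace ℝ EX']
    {HX' : Type*} [TopologicalSpace HX'] {IX' : ModelWithCorners ℝ EX' HX'}
    {X' : Type*} [TopologicalSpace X'] [ChartedSpace HX' X']
    {EY : Type*} [NormedAddCommGroup EY] [NormedSpace ℝ EY]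
    {HY : Type*} [TopologicalSpace HY] {IY : ModelWithCorners ℝ EY HY}
    {Y : Type*} [TopologicalSpace Y] [ChartedSpace HY Y]
    {EY' : Type*} [NormedAddCommGroup EY'] [NormedSpace ℝ EY']
    {HY' : Type*} [TopologicalSpace HY'] {IY' : ModelWithCorners ℝ EY' HY'}
    {Y' : Type*} [TopologicalSpace Y'] [ChartedSpace HY' Y']
    {t : X → Y} {l : X → X'} {b : X' → Y'} {r : Y → Y'}
    (hsq : r ∘ t = b ∘ l) (x : X)
    (hr : MDifferentiableAt IY IY' r (t x)) (ht : MDifferentiableAt IX IY t x)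
    (hb : MDifferentiableAt IX' IY' b (l x)) (hl : MDifferentiableAt IX IX' l x) :
    LinearMap.range (mfderiv IX IY t x).toLinearMap ≤
      (LinearMap.range (mfderiv IX' IY' b (l x)).toLinearMap).comap
        (mfderiv IY IY' r (t x)).toLinearMap := by
  rintro w hw
  obtain ⟨v, rfl⟩ := LinearMap.mem_range.mp hw
  have e1 : mfderiv IX IY' (r ∘ t) x =
      (mfderiv IY IY' r (t x)).comp (mfderiv IX IY t x) := mfderiv_comp x hr ht
  have e2 : mfderiv IX IY' (b ∘ l) x =
      (mfderiv IX' IY' b (l x)).comp (mfderiv IX IX' l x) := mfderiv_comp x hb hl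
  have e3 : mfderiv IX IY' (r ∘ t) x = mfderiv IX IY' (b ∘ l) x := by rw [hsq]
  refine ⟨mfderiv IX IX' l x v, ?_⟩
  have h := congrArg (fun L : TangentSpace IX x →L[ℝ] TangentSpace IY' (r (t x)) => L v) e3
  rw [e1, e2] at h
  exact h.symm

theorem mapQ_injective_iff' {R M N : Type*} [Ring R] [AddCommGroup M] [Module R M]
    [AddCommGroup N] [Module R N]
    (A : Submodule R M) (B : Submodule R N) (f : M →ₗ[R] N) (h : A ≤ B.comap f) :
    Function.Injective (A.mapQ B f h) ↔ ∀ x, f x ∈ B → x ∈ A := by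
  constructor
  · intro hinj x hx
    have h0 : A.mapQ B f h (A.mkQ x) = 0 := by
      simp only [Submodule.mapQ_apply, Submodule.mkQ_apply]
      exact (Submodule.Quotient.mk_eq_zero B).2 hx
    have : A.mkQ x = 0 := by
      apply hinj; rw [h0, map_zero]
    exact (Submodule.Quotient.mk_eq_zero A).1 this
  · intro h' 
    rw [← LinearMap.ker_eq_bot]
    rw [eq_bot_iff]
    intro q hq
    obtain ⟨x, rfl⟩ := A.mkQ_surjective q
    have : f x ∈ B := by
      have := (LinearMap.mem_ker.1 hq)
      simp only [Submodule.mapQ_apply, Submodule.mkQ_apply] at this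
      exact (Submodule.Quotient.mk_eq_zero B).1 this
    simpa [Submodule.Quotient.mk_eq_zero] using h' x this

/-- **Proposition (regular immersion squares), equivalence (1) ⇔ (2).**
For an immersion square `(i₁, j₁, j₂, i₂)` and `m ∈ M₁`, the fiberwise normal differential
`ν²(J)ₘ : ν(i₁)ₘ → ν(i₂)_(j₁ m)` (induced by `mfderiv j₂ (i₁ m)`) is injective iff the
fiberwise normal differential `ν²(I)ₘ : ν(j₁)ₘ → ν(j₂)_(i₁ m)` (induced by
`mfderiv i₂ (j₁ m)`) is injective. -/
theorem normal_differential_injective_symm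
    {E₁ : Type*} [NormedAddCommGroup E₁] [NormedSpace ℝ E₁] [FiniteDimensional ℝ E₁]
    {H₁ : Type*} [TopologicalSpace H₁] {I₁ : ModelWithCorners ℝ E₁ H₁} [I₁.Boundaryless]
    {M₁ : Type*} [TopologicalSpace M₁] [ChartedSpace H₁ M₁] [IsManifold I₁ (⊤ : ℕ∞) M₁]
    {E₂ : Type*} [NormedAddCommGroup E₂] [NormedSpace ℝ E₂] [FiniteDimensional ℝ E₂]
    {H₂ : Type*} [TopologicalSpace H₂] {I₂ : ModelWithCorners ℝ E₂ H₂} [I₂.Boundaryless]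
    {M₂ : Type*} [TopologicalSpace M₂] [ChartedSpace H₂ M₂] [IsManifold I₂ (⊤ : ℕ∞) M₂]
    {E₃ : Type*} [NormedAddCommGroup E₃] [NormedSpace ℝ E₃] [FiniteDimensional ℝ E₃]
    {H₃ : Type*} [TopologicalSpace H₃] {I₃ : ModelWithCorners ℝ E₃ H₃} [I₃.Boundaryless]
    {N₁ : Type*} [TopologicalSpace N₁] [ChartedSpace H₃ N₁] [IsManifold I₃ (⊤ : ℕ∞) N₁]
    {E₄ : Type*} [NormedAddCommGroup E₄] [NormedSpace ℝ E₄] [FiniteDimensional ℝ E₄]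
    {H₄ : Type*} [TopologicalSpace H₄] {I₄ : ModelWithCorners ℝ E₄ H₄} [I₄.Boundaryless]
    {N₂ : Type*} [TopologicalSpace N₂] [ChartedSpace H₄ N₂] [IsManifold I₄ (⊤ : ℕ∞) N₂]
    {i₁ : M₁ → M₂} {j₁ : M₁ → N₁} {j₂ : M₂ → N₂} {i₂ : N₁ → N₂}
    (hi₁ : ContMDiff I₁ I₂ (⊤ : ℕ∞) i₁) (hi₁imm : ∀ x, Function.Injective (mfderiv I₁ I₂ i₁ x))
    (hj₁ : ContMDiff I₁ I₃ (⊤ : ℕ∞) j₁) (hj₁imm : ∀ x, Function.Injective (mfderiv I₁ I₃ j₁ x))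
    (hj₂ : ContMDiff I₂ I₄ (⊤ : ℕ∞) j₂) (hj₂imm : ∀ x, Function.Injective (mfderiv I₂ I₄ j₂ x))
    (hi₂ : ContMDiff I₃ I₄ (⊤ : ℕ∞) i₂) (hi₂imm : ∀ x, Function.Injective (mfderiv I₃ I₄ i₂ x))
    (hsq : i₂ ∘ j₁ = j₂ ∘ i₁)
    (m : M₁) :
    Function.Injective
      (Submodule.mapQ (LinearMap.range (mfderiv I₁ I₂ i₁ m).toLinearMap)
        (LinearMap.range (mfderiv I₃ I₄ i₂ (j₁ m)).toLinearMap)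
        (mfderiv I₂ I₄ j₂ (i₁ m)).toLinearMap
        (mapsTo_square hsq.symm m (hj₂.mdifferentiableAt (by simp))
          (hi₁.mdifferentiableAt (by simp)) (hi₂.mdifferentiableAt (by simp))
          (hj₁.mdifferentiableAt (by simp))))
      ↔
    Function.Injective
      (Submodule.mapQ (LinearMap.range (mfderiv I₁ I₃ j₁ m).toLinearMap)
        (LinearMap.range (mfderiv I₂ I₄ j₂ (i₁ m)).toLinearMap)
        (mfderiv I₃ I₄ i₂ (j₁ m)).toLinearMap
        (mapsTo_square hsq m (hi₂.mdifferentiableAt (by simp))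
          (hj₁.mdifferentiableAt (by simp)) (hj₂.mdifferentiableAt (by simp))
          (hi₁.mdifferentiableAt (by simp)))) := by
  have e1 : mfderiv I₁ I₄ (i₂ ∘ j₁) m =
      (mfderiv I₃ I₄ i₂ (j₁ m)).comp (mfderiv I₁ I₃ j₁ m) :=
    mfderiv_comp m (hi₂.mdifferentiableAt (by simp)) (hj₁.mdifferentiableAt (by simp))
  have e2 : mfderiv I₁ I₄ (j₂ ∘ i₁) m =
      (mfderiv I₂ I₄ j₂ (i₁ m)).comp (mfderiv I₁ I₂ i₁ m) :=
    mfderiv_comp m (hj₂.mdifferentiableAt (by simp)) (hi₁.mdifferentiableAt (by simp))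
  have ecomm : ∀ u, mfderiv I₃ I₄ i₂ (j₁ m) (mfderiv I₁ I₃ j₁ m u) =
      mfderiv I₂ I₄ j₂ (i₁ m) (mfderiv I₁ I₂ i₁ m u) := by
    intro u
    have : mfderiv I₁ I₄ (i₂ ∘ j₁) m = mfderiv I₁ I₄ (j₂ ∘ i₁) m := by rw [hsq]
    have := congrArg (fun f => f u) (e1.symm.trans (this.trans e2))
    exact this
  refine (mapQ_injective_iff' _ _ _ _).trans (Iff.trans ?_ (mapQ_injective_iff' _ _ _ _).symm)
  constructor
  · intro h w hw
    obtain ⟨v, hv⟩ := LinearMap.mem_range.1 hw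
    have hv' : mfderiv I₂ I₄ j₂ (i₁ m) v ∈
        LinearMap.range (mfderiv I₃ I₄ i₂ (j₁ m)).toLinearMap := ⟨w, hv.symm⟩
    obtain ⟨u, hu⟩ := LinearMap.mem_range.1 (h v hv')
    have : mfderiv I₃ I₄ i₂ (j₁ m) (mfderiv I₁ I₃ j₁ m u) =
        mfderiv I₃ I₄ i₂ (j₁ m) w := by
      rw [← hu] at hv; exact (ecomm u).trans hv
    exact ⟨u, hi₂imm (j₁ m) this⟩
  · intro h v hv
    obtain ⟨w, hw⟩ := LinearMap.mem_range.1 hv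
    have hw' : mfderiv I₃ I₄ i₂ (j₁ m) w ∈
        LinearMap.range (mfderiv I₂ I₄ j₂ (i₁ m)).toLinearMap := ⟨v, hw.symm⟩
    obtain ⟨u, hu⟩ := LinearMap.mem_range.1 (h w hw')
    have : mfderiv I₂ I₄ j₂ (i₁ m) (mfderiv I₁ I₂ i₁ m u) =
        mfderiv I₂ I₄ j₂ (i₁ m) v := by
      rw [← hu] at hw; exact (ecomm u).symm.trans hw
    exact ⟨u, hj₂imm (i₁ m) this⟩
end

section
/- (Fiberwise exact sequence for a composition of immersions, underlying the vertical functoriality proposition.) Let i: M → N and j: N → P be immersions and m ∈ M. Then: (a) mfderiv j (i m) maps range(mfderiv i m) into range(mfderiv (j∘i) m), inducing a linear map ν̄: ν(i)_m → ν(j∘i)_m; (b) range(mfderiv (j∘i) m) is contained in range(mfderiv j (i m)), inducing a linear projection π̄: ν(j∘i)_m → ν(j)_{i(m)}; and (c) the sequence 0 → ν(i)_m → ν(j∘i)_m → ν(j)_{i(m)} → 0 is exact: ν̄ is injective, π̄ is surjective, and the kernel of π̄ equals the range of ν̄. -/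
open scoped Manifold
open Function

/-- **Chain rule for a composition.**  For a composition `g ∘ f`, the differential
`mfderiv g (f x)` maps the range of `mfderiv f x` into the range of `mfderiv (g ∘ f) x`. -/
theorem comp_mapsTo
    {EM : Type*} [NormedAddCommGroup EM] [NormedSpace ℝ EM]
    {HM : Type*} [TopologicalSpace HM] {IM : ModelWithCorners ℝ EM HM}
    {M : Type*} [TopologicalSpace M] [ChartedSpace HM M]
    {EN : Type*} [NormedAddCommGroup EN] [NormedSpace ℝ EN]
    {HN : Type*} [TopologicalSpace HN] {IN' : ModelWithCorners ℝ EN HN}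
    {N : Type*} [TopologicalSpace N] [ChartedSpace HN N]
    {EP : Type*} [NormedAddCommGroup EP] [NormedSpace ℝ EP]
    {HP : Type*} [TopologicalSpace HP] {IP : ModelWithCorners ℝ EP HP}
    {P : Type*} [TopologicalSpace P] [ChartedSpace HP P]
    {f : M → N} {g : N → P} (x : M)
    (hg : MDifferentiableAt IN' IP g (f x)) (hf : MDifferentiableAt IM IN' f x) :
    LinearMap.range (mfderiv IM IN' f x).toLinearMap ≤
      (LinearMap.range (mfderiv IM IP (g ∘ f) x).toLinearMap).comap
        (mfderiv IN' IP g (f x)).toLinearMap := by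
  rintro w hw
  obtain ⟨v, rfl⟩ := LinearMap.mem_range.mp hw
  refine Submodule.mem_comap.mpr (LinearMap.mem_range.mpr ⟨v, ?_⟩)
  rw [mfderiv_comp x hg hf]; exact rfl

/-- For a composition `g ∘ f`, the range of `mfderiv (g ∘ f) x` is contained in the
range of `mfderiv g (f x)`. -/
theorem range_comp_le
    {EM : Type*} [NormedAddCommGroup EM] [NormedSpace ℝ EM]
    {HM : Type*} [TopologicalSpace HM] {IM : ModelWithCorners ℝ EM HM}
    {M : Type*} [TopologicalSpace M] [ChartedSpace HM M]
    {EN : Type*} [NormedAddCommGroup EN] [NormedSpace ℝ EN]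
    {HN : Type*} [TopologicalSpace HN] {IN' : ModelWithCorners ℝ EN HN}
    {N : Type*} [TopologicalSpace N] [ChartedSpace HN N]
    {EP : Type*} [NormedAddCommGroup EP] [NormedSpace ℝ EP]
    {HP : Type*} [TopologicalSpace HP] {IP : ModelWithCorners ℝ EP HP}
    {P : Type*} [TopologicalSpace P] [ChartedSpace HP P]
    {f : M → N} {g : N → P} (x : M)
    (hg : MDifferentiableAt IN' IP g (f x)) (hf : MDifferentiableAt IM IN' f x) :
    LinearMap.range (mfderiv IM IP (g ∘ f) x).toLinearMap ≤
      @id (Submodule ℝ (TangentSpace IP ((g ∘ f) x)))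
        (LinearMap.range (mfderiv IN' IP g (f x)).toLinearMap) := by
  rintro w hw
  obtain ⟨v, rfl⟩ := LinearMap.mem_range.mp hw
  exact LinearMap.mem_range.mpr
    ⟨mfderiv IM IN' f x v, by rw [mfderiv_comp x hg hf]; exact rfl⟩

/-- The inclusion of ranges of `range_comp_le`, written as a `comap` along the identity,
as needed to define the canonical projection between the normal spaces. -/
theorem proj_mapsTo
    {EM : Type*} [NormedAddCommGroup EM] [NormedSpace ℝ EM]
    {HM : Type*} [TopologicalSpace HM] {IM : ModelWithCorners ℝ EM HM}
    {M : Type*} [TopologicalSpace M] [ChartedSpace HM M]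
    {EN : Type*} [NormedAddCommGroup EN] [NormedSpace ℝ EN]
    {HN : Type*} [TopologicalSpace HN] {IN' : ModelWithCorners ℝ EN HN}
    {N : Type*} [TopologicalSpace N] [ChartedSpace HN N]
    {EP : Type*} [NormedAddCommGroup EP] [NormedSpace ℝ EP]
    {HP : Type*} [TopologicalSpace HP] {IP : ModelWithCorners ℝ EP HP}
    {P : Type*} [TopologicalSpace P] [ChartedSpace HP P]
    {f : M → N} {g : N → P} (x : M)
    (hg : MDifferentiableAt IN' IP g (f x)) (hf : MDifferentiableAt IM IN' f x) :
    LinearMap.range (mfderiv IM IP (g ∘ f) x).toLinearMap ≤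
      (@id (Submodule ℝ (TangentSpace IP ((g ∘ f) x)))
        (LinearMap.range (mfderiv IN' IP g (f x)).toLinearMap)).comap
          (LinearMap.id : TangentSpace IP ((g ∘ f) x) →ₗ[ℝ] TangentSpace IP ((g ∘ f) x)) := by
  rw [Submodule.comap_id]
  exact range_comp_le x hg hf

/-- **Fiberwise exact sequence for a composition of immersions.**
For immersions `i : M → N`, `j : N → P` and `m ∈ M`:
(a) `mfderiv j (i m)` maps `range (mfderiv i m)` into `range (mfderiv (j ∘ i) m)`,
inducing `nuBar : ν(i)ₘ → ν(j ∘ i)ₘ`; (b) `range (mfderiv (j ∘ i) m) ⊆ range (mfderiv j (i m))`,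
inducing the projection `piBar : ν(j ∘ i)ₘ → ν(j)_(i m)`; and (c) the sequence
`0 → ν(i)ₘ → ν(j ∘ i)ₘ → ν(j)_(i m) → 0` is exact. -/
theorem normal_sequence_of_composition
    {EM : Type*} [NormedAddCommGroup EM] [NormedSpace ℝ EM] [FiniteDimensional ℝ EM]
    {HM : Type*} [TopologicalSpace HM] {IM : ModelWithCorners ℝ EM HM} [IM.Boundaryless]
    {M : Type*} [TopologicalSpace M] [ChartedSpace HM M] [IsManifold IM (⊤ : ℕ∞) M]
    {EN : Type*} [NormedAddCommGroup EN] [NormedSpace ℝ EN] [FiniteDimensional ℝ EN]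
    {HN : Type*} [TopologicalSpace HN] {IN' : ModelWithCorners ℝ EN HN} [IN'.Boundaryless]
    {N : Type*} [TopologicalSpace N] [ChartedSpace HN N] [IsManifold IN' (⊤ : ℕ∞) N]
    {EP : Type*} [NormedAddCommGroup EP] [NormedSpace ℝ EP] [FiniteDimensional ℝ EP]
    {HP : Type*} [TopologicalSpace HP] {IP : ModelWithCorners ℝ EP HP} [IP.Boundaryless]
    {P : Type*} [TopologicalSpace P] [ChartedSpace HP P] [IsManifold IP (⊤ : ℕ∞) P]
    {i : M → N} {j : N → P}
    (hi : ContMDiff IM IN' (⊤ : ℕ∞) i) (hiimm : ∀ x, Function.Injective (mfderiv IM IN' i x))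
    (hj : ContMDiff IN' IP (⊤ : ℕ∞) j) (hjimm : ∀ x, Function.Injective (mfderiv IN' IP j x))
    (m : M) :
    let nuBar : (TangentSpace IN' (i m) ⧸ LinearMap.range (mfderiv IM IN' i m).toLinearMap) →ₗ[ℝ]
        (TangentSpace IP ((j ∘ i) m) ⧸ LinearMap.range (mfderiv IM IP (j ∘ i) m).toLinearMap) :=
      Submodule.mapQ (LinearMap.range (mfderiv IM IN' i m).toLinearMap)
        (LinearMap.range (mfderiv IM IP (j ∘ i) m).toLinearMap)
        (mfderiv IN' IP j (i m)).toLinearMap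
        (comp_mapsTo m (hj.mdifferentiableAt (by simp)) (hi.mdifferentiableAt (by simp)))
    let piBar : (TangentSpace IP ((j ∘ i) m) ⧸ LinearMap.range (mfderiv IM IP (j ∘ i) m).toLinearMap) →ₗ[ℝ]
        (TangentSpace IP ((j ∘ i) m) ⧸
          @id (Submodule ℝ (TangentSpace IP ((j ∘ i) m)))
            (LinearMap.range (mfderiv IN' IP j (i m)).toLinearMap)) :=
      Submodule.mapQ (LinearMap.range (mfderiv IM IP (j ∘ i) m).toLinearMap)
        (@id (Submodule ℝ (TangentSpace IP ((j ∘ i) m)))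
          (LinearMap.range (mfderiv IN' IP j (i m)).toLinearMap))
        LinearMap.id
        (proj_mapsTo m (hj.mdifferentiableAt (by simp)) (hi.mdifferentiableAt (by simp)))
    (∀ w ∈ LinearMap.range (mfderiv IM IN' i m).toLinearMap,
        (mfderiv IN' IP j (i m)) w ∈ LinearMap.range (mfderiv IM IP (j ∘ i) m).toLinearMap) ∧
    (LinearMap.range (mfderiv IM IP (j ∘ i) m).toLinearMap ≤
        @id (Submodule ℝ (TangentSpace IP ((j ∘ i) m)))
          (LinearMap.range (mfderiv IN' IP j (i m)).toLinearMap)) ∧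
    Function.Injective nuBar ∧ Function.Surjective piBar ∧
    LinearMap.ker piBar = LinearMap.range nuBar := by
  intro nuBar piBar
  have hg : MDifferentiableAt IN' IP j (i m) := hj.mdifferentiableAt (by simp)
  have hf : MDifferentiableAt IM IN' i m := hi.mdifferentiableAt (by simp)
  have hDji : mfderiv IM IP (j ∘ i) m =
      (mfderiv IN' IP j (i m)).comp (mfderiv IM IN' i m) := mfderiv_comp m hg hf
  refine ⟨fun w hw => comp_mapsTo m hg hf hw, range_comp_le m hg hf, ?_, ?_, ?_⟩
  · rw [← LinearMap.ker_eq_bot, LinearMap.ker_eq_bot']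
    intro x hx
    obtain ⟨w, rfl⟩ := Submodule.Quotient.mk_surjective _ x
    rw [Submodule.mapQ_apply, Submodule.Quotient.mk_eq_zero] at hx
    obtain ⟨v, hv⟩ := LinearMap.mem_range.mp hx
    rw [hDji] at hv
    have : mfderiv IM IN' i m v = w := hjimm (i m) hv
    rw [Submodule.Quotient.mk_eq_zero]
    exact ⟨v, this⟩
  · intro y
    obtain ⟨x, rfl⟩ := Submodule.Quotient.mk_surjective _ y
    exact ⟨Submodule.Quotient.mk x, by rw [Submodule.mapQ_apply]; rfl⟩
  · ext x
    obtain ⟨v, rfl⟩ := Submodule.Quotient.mk_surjective _ x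
    constructor
    · intro hx
      rw [LinearMap.mem_ker, Submodule.mapQ_apply, Submodule.Quotient.mk_eq_zero] at hx
      obtain ⟨w, hw⟩ := LinearMap.mem_range.mp hx
      exact ⟨Submodule.Quotient.mk w, by rw [Submodule.mapQ_apply]; exact congrArg _ hw⟩
    · rintro ⟨y, hy⟩
      obtain ⟨w, rfl⟩ := Submodule.Quotient.mk_surjective _ y
      rw [Submodule.mapQ_apply] at hy
      rw [LinearMap.mem_ker, Submodule.mapQ_apply, Submodule.Quotient.mk_eq_zero]
      set u : TangentSpace IP ((j ∘ i) m) := mfderiv IN' IP j (i m) w with hu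
      have h1 : u - v ∈ LinearMap.range (mfderiv IM IP (j ∘ i) m).toLinearMap :=
        (Submodule.Quotient.eq _).mp hy
      have h2 := range_comp_le m hg hf h1
      have h3 : u ∈ LinearMap.range (mfderiv IN' IP j (i m)).toLinearMap := ⟨w, rfl⟩
      simpa using Submodule.sub_mem _ h3 h2
end
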